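/- arXiv:1710.03386 — 7 statements merged into one kernel-verified Lean document; each statement's English description precedes it below -/
import Mathlib

section
/- For every finite simple graph G and every commutative ring R with unity, mz(G) ≤ γ_R(G); that is, |V(G)| minus the zero forcing number of G is at most the algebraic co-rank of G over R. -/
open scoped Classical

variable {V : Type*}

/-- The generalized Laplacian matrix `L(G, X_G)` of a simple graph `G`, with entries in the
polynomial ring `R[X_G]`: the `(u,v)` entry is the indeterminate `x_u` if `u = v`,
`-1` if `u` and `v` are adjacent, and `0` otherwise. -/
noncomputable def genLaplacian (R : Type*) [CommRing R] (G : SimpleGraph V) :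
    Matrix V V (MvPolynomial V R) := fun u v =>
  if u = v then MvPolynomial.X u else if G.Adj u v then -1 else 0

/-- The ideal generated by the determinants of all `i × i` submatrices of a square matrix. -/
noncomputable def minorsIdeal {S : Type*} [CommRing S] (M : Matrix V V S) (i : ℕ) : Ideal S :=
  Ideal.span { d : S | ∃ f g : Fin i → V, Function.Injective f ∧ Function.Injective g ∧
    d = (M.submatrix f g).det }

/-- The `i`-th critical ideal `I_i(G, X_G) ⊆ R[X_G]` of a simple graph `G`. -/
noncomputable def criticalIdeal (R : Type*) [CommRing R] (G : SimpleGraph V) (i : ℕ) :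
    Ideal (MvPolynomial V R) :=
  minorsIdeal (genLaplacian R G) i

/-- The algebraic co-rank `γ_R(G)`: the largest `i` (with `0 ≤ i ≤ |V(G)|`) such that the
`i`-th critical ideal of `G` over `R` is trivial (i.e. the whole ring). -/
noncomputable def algCoRank (R : Type*) [CommRing R] [Fintype V] (G : SimpleGraph V) : ℕ :=
  sSup {i | i ≤ Fintype.card V ∧ criticalIdeal R G i = ⊤}

/-- The rank of a square matrix over a commutative ring: the largest `k` such that some
`k × k` minor is nonzero and is not a zero divisor. -/
noncomputable def ringRank {R : Type*} [CommRing R] (M : Matrix V V R) : ℕ :=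
  sSup {k | ∃ f g : Fin k → V, Function.Injective f ∧ Function.Injective g ∧
    (M.submatrix f g).det ≠ 0 ∧ (M.submatrix f g).det ∈ nonZeroDivisors R}

/-- `A ∈ S_R(G)`: `A` is a symmetric matrix over `R`, indexed by the vertices of `G`, whose
off-diagonal `(u,v)` entry is nonzero iff `u` and `v` are adjacent (the diagonal is free). -/
def IsGraphMatrix {R : Type*} [CommRing R] (G : SimpleGraph V) (A : Matrix V V R) : Prop :=
  A.IsSymm ∧ ∀ u v : V, u ≠ v → (A u v ≠ 0 ↔ G.Adj u v)

/-- The minimum rank `mr_R(G)`: the smallest rank among matrices in `S_R(G)`. -/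
noncomputable def minRank (R : Type*) [CommRing R] (G : SimpleGraph V) : ℕ :=
  sInf {k | ∃ A : Matrix V V R, IsGraphMatrix G A ∧ ringRank A = k}

/-- The generalized Laplacian of `G` evaluated at a vector `d`: `L(G, d)` has `d u` on the
diagonal, `-1` at adjacent off-diagonal pairs and `0` elsewhere. -/
noncomputable def evalLaplacian {R : Type*} [CommRing R] (G : SimpleGraph V) (d : V → R) :
    Matrix V V R := fun u v =>
  if u = v then d u else if G.Adj u v then -1 else 0

/-- The critical minimum rank `mr^cr_R(G)`: the minimum of `rank (L(G,d))` over `d ∈ R^{V(G)}`. -/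
noncomputable def crMinRank (R : Type*) [CommRing R] (G : SimpleGraph V) : ℕ :=
  sInf {k | ∃ d : V → R, ringRank (evalLaplacian G d) = k}

/-- `a, b : Fin k → V` form a chronological list of forces for the zero forcing game on `G`
started with the vertices of `B` blue: at step `t` the force `a t → b t` is performed, which
requires that `a t` is blue, that `b t` is a white neighbor of `a t`, and that every white
neighbor of `a t` equals `b t`. -/
def IsChronList (G : SimpleGraph V) (B : Set V) {k : ℕ} (a b : Fin k → V) : Prop :=
  (∀ t, G.Adj (a t) (b t)) ∧
  (∀ t, a t ∈ B ∨ ∃ s, s < t ∧ b s = a t) ∧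
  (∀ t, b t ∉ B ∧ ∀ s, s < t → b s ≠ b t) ∧
  (∀ t z, G.Adj (a t) z → z ∉ B → (∀ s, s < t → b s ≠ z) → z = b t)

/-- `B` is a zero forcing set of `G`: starting with exactly `B` blue, there is a sequence of
forces turning every vertex of `G` blue. -/
def IsZeroForcingSet (G : SimpleGraph V) (B : Set V) : Prop :=
  ∃ (k : ℕ) (a b : Fin k → V), IsChronList G B a b ∧ ∀ v : V, v ∈ B ∨ ∃ t, b t = v

/-- The zero forcing number `Z(G)`: the minimum cardinality of a zero forcing set of `G`. -/
noncomputable def zeroForcingNumber [Fintype V] (G : SimpleGraph V) : ℕ :=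
  sInf {m | ∃ B : Finset V, B.card = m ∧ IsZeroForcingSet G ↑B}

/-- `mz(G) = |V(G)| - Z(G)`. -/
noncomputable def mz [Fintype V] (G : SimpleGraph V) : ℕ :=
  Fintype.card V - zeroForcingNumber G

/-!
Take a minimum zero forcing set `B` together with a chronological list of forces
`a₁ → b₁, …, a_k → b_k`. When `a_s` forces, every later target `b_t` (`t > s`) is still white, so
`a_s` is neither equal nor adjacent to `b_t`. Hence the `k × k` submatrix of `L(G, X_G)` with rows
`a₁, …, a_k` and columns `b₁, …, b_k` is lower triangular with `-1` on the diagonal, and so is each of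
its leading principal submatrices: every `m × m` minor with `m ≤ k` is `(-1)^m`, a unit, and
`I_m(G, X_G)` is trivial. Since every vertex outside `B` is forced, `k ≥ |V| - |B| = mz(G)`.
-/

theorem minorsIdeal_eq_top_of_isUnit_det {S : Type*} [CommRing S] {M : Matrix V V S} {m : ℕ}
    {f g : Fin m → V} (hf : Function.Injective f) (hg : Function.Injective g)
    (hdet : IsUnit (M.submatrix f g).det) : minorsIdeal M m = ⊤ :=
  Ideal.eq_top_of_isUnit_mem _ (Ideal.subset_span ⟨f, g, hf, hg, rfl⟩) hdet

theorem le_algCoRank_of_criticalIdeal_eq_top [Fintype V] {R : Type*} [CommRing R]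
    {G : SimpleGraph V} {i : ℕ} (hi : i ≤ Fintype.card V) (h : criticalIdeal R G i = ⊤) :
    i ≤ algCoRank R G :=
  le_csSup ⟨Fintype.card V, fun _ hj => hj.1⟩ ⟨hi, h⟩

namespace IsChronList

variable {G : SimpleGraph V} {B : Set V} {k : ℕ} {a b : Fin k → V}

theorem injective_forced (h : IsChronList G B a b) : Function.Injective b :=
  Function.injective_iff_pairwise_ne.2 <|
    (Std.Symm.pairwise_on _).2 fun _ t hst => (h.2.2.1 t).2 _ hst

theorem forcing_ne_forced_of_lt (h : IsChronList G B a b) {s t : Fin k} (hst : s < t) :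
    a s ≠ b t := by
  rcases h.2.1 s with hB | ⟨r, hrs, hr⟩
  · exact fun heq => (h.2.2.1 t).1 (heq ▸ hB)
  · exact fun heq => (h.2.2.1 t).2 r (hrs.trans hst) (hr.trans heq)

theorem not_adj_forcing_forced_of_lt (h : IsChronList G B a b) {s t : Fin k} (hst : s < t) :
    ¬ G.Adj (a s) (b t) := fun hadj =>
  -- `b t` is still white at step `s`, so it would be the unique white neighbour `b s` of `a s`.
  (h.2.2.1 t).2 s hst <|
    (h.2.2.2 s (b t) hadj (h.2.2.1 t).1 fun r hrs => (h.2.2.1 t).2 r (hrs.trans hst)).symm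

theorem injective_forcing (h : IsChronList G B a b) : Function.Injective a :=
  Function.injective_iff_pairwise_ne.2 <|
    (Std.Symm.pairwise_on _).2 fun _ t hst heq =>
      h.not_adj_forcing_forced_of_lt hst (heq ▸ h.1 t)

theorem genLaplacian_forcing_forced (h : IsChronList G B a b) (R : Type*) [CommRing R]
    (t : Fin k) : genLaplacian R G (a t) (b t) = -1 := by
  simp [genLaplacian, (h.1 t).ne, h.1 t]

theorem genLaplacian_forcing_forced_of_lt (h : IsChronList G B a b) (R : Type*) [CommRing R]
    {s t : Fin k} (hst : s < t) : genLaplacian R G (a s) (b t) = 0 := by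
  simp [genLaplacian, h.forcing_ne_forced_of_lt hst, h.not_adj_forcing_forced_of_lt hst]

theorem det_genLaplacian_submatrix (h : IsChronList G B a b) (R : Type*) [CommRing R]
    {m : ℕ} {e : Fin m → Fin k} (he : StrictMono e) :
    ((genLaplacian R G).submatrix (a ∘ e) (b ∘ e)).det = (-1) ^ m := by
  rw [Matrix.det_of_isLowerTriangular ((genLaplacian R G).submatrix (a ∘ e) (b ∘ e))
    fun s t hst => h.genLaplacian_forcing_forced_of_lt R (he (show s < t from hst))]
  simp [h.genLaplacian_forcing_forced R]

theorem criticalIdeal_eq_top (h : IsChronList G B a b) (R : Type*) [CommRing R] {m : ℕ}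
    (hm : m ≤ k) : criticalIdeal R G m = ⊤ :=
  minorsIdeal_eq_top_of_isUnit_det
    (h.injective_forcing.comp (Fin.castLE_injective hm))
    (h.injective_forced.comp (Fin.castLE_injective hm))
    (h.det_genLaplacian_submatrix R (Fin.strictMono_castLE hm) ▸ isUnit_one.neg.pow m)

end IsChronList

theorem card_sub_card_le_of_forall_mem_or_exists [Fintype V] {B : Finset V} {k : ℕ}
    {b : Fin k → V} (hcover : ∀ v, v ∈ B ∨ ∃ t, b t = v) : Fintype.card V - B.card ≤ k := by
  have hsub : (Finset.univ : Finset V) ⊆ B ∪ Finset.univ.image b := fun v _ => by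
    rcases hcover v with hv | ⟨t, rfl⟩ <;> simp [*]
  have hcard : Fintype.card V ≤ B.card + k := calc
    Fintype.card V = (Finset.univ : Finset V).card := Finset.card_univ.symm
    _ ≤ (B ∪ Finset.univ.image b).card := Finset.card_le_card hsub
    _ ≤ B.card + (Finset.univ.image b).card := Finset.card_union_le _ _
    _ ≤ B.card + k := by simpa using Finset.card_image_le (s := Finset.univ) (f := b)
  omega

theorem isZeroForcingSet_univ (G : SimpleGraph V) : IsZeroForcingSet G Set.univ :=
  ⟨0, Fin.elim0, Fin.elim0, ⟨(·.elim0), (·.elim0), (·.elim0), fun t => t.elim0⟩,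
    fun v => .inl (Set.mem_univ v)⟩

theorem exists_isZeroForcingSet_card_eq [Fintype V] (G : SimpleGraph V) :
    ∃ B : Finset V, B.card = zeroForcingNumber G ∧ IsZeroForcingSet G ↑B :=
  Nat.sInf_mem (s := {m | ∃ B : Finset V, B.card = m ∧ IsZeroForcingSet G ↑B})
    ⟨_, Finset.univ, rfl, by simpa using isZeroForcingSet_univ G⟩

/-- For every finite simple graph `G` and every commutative ring `R` with
unity, `mz(G) ≤ γ_R(G)`: the number of vertices of `G` minus the zero forcing number of `G`
is at most the algebraic co-rank of `G` over `R`. -/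
theorem mz_le_algCoRank {V : Type*} [Fintype V] (G : SimpleGraph V)
    (R : Type*) [CommRing R] :
    mz G ≤ algCoRank R G := by
  obtain ⟨B, hB, k, a, b, hforces, hcover⟩ := exists_isZeroForcingSet_card_eq G
  have hmz : mz G ≤ k := by
    rw [mz, ← hB]
    exact card_sub_card_le_of_forall_mem_or_exists hcover
  exact le_algCoRank_of_criticalIdeal_eq_top (Nat.sub_le _ _) (hforces.criticalIdeal_eq_top R hmz)
end

section
/- Let G be a finite simple graph on n vertices, B a zero forcing set of G of cardinality n − k, and let a_1 → b_1, …, a_k → b_k be a chronological list of forces that colors all of V(G) blue starting from B. Then the k×k submatrix of the generalized Laplacian matrix L(G,X_G) whose rows are indexed by a_1, …, a_k and whose columns are indexed by b_1, …, b_k (in these orders) is lower triangular with entry −1 in every diagonal position; in particular its determinant is ±1, and hence the critical ideal I_k(G,X_G) is trivial. -/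
open scoped Classical

variable {V : Type*}

/-- Let `G` be a finite simple graph on `n` vertices, `B` a zero forcing
set of `G` of cardinality `n - k`, and `a 1 → b 1, …, a k → b k` a chronological list of
forces that colors all of `V(G)` blue starting from `B`.  Then the `k × k` submatrix of the
generalized Laplacian `L(G, X_G)` whose rows are indexed by `a 1, …, a k` and whose columns
are indexed by `b 1, …, b k` (in these orders) is lower triangular with entry `-1` in every
diagonal position; in particular its determinant is `±1`, and hence the critical ideal
`I_k(G, X_G)` is trivial. -/
theorem chronList_submatrix_lowerTriangular {V : Type*} [Fintype V]
    (R : Type*) [CommRing R] (G : SimpleGraph V) (k : ℕ) (B : Finset V)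
    (hcard : B.card + k = Fintype.card V)
    (a b : Fin k → V) (hchron : IsChronList G ↑B a b)
    (hall : ∀ v : V, v ∈ B ∨ ∃ t, b t = v) :
    (∀ t : Fin k, (genLaplacian R G).submatrix a b t t = -1) ∧
    (∀ s t : Fin k, s < t → (genLaplacian R G).submatrix a b s t = 0) ∧
    (((genLaplacian R G).submatrix a b).det = 1 ∨
      ((genLaplacian R G).submatrix a b).det = -1) ∧
    criticalIdeal R G k = ⊤ := by
  classical
  obtain ⟨hadj, hblue, hwhite, hforce⟩ := hchron
  have key1 : ∀ s t : Fin k, s < t → a s ≠ b t := by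
    intro s t hst h
    rcases hblue s with hB | ⟨u, hu, hbu⟩
    · exact (hwhite t).1 (h ▸ hB)
    · exact (hwhite t).2 u (hu.trans hst) (hbu.trans h)
  have key2 : ∀ s t : Fin k, s < t → ¬ G.Adj (a s) (b t) := by
    intro s t hst hA
    have := hforce s (b t) hA (hwhite t).1 (fun u hu => (hwhite t).2 u (hu.trans hst))
    exact (hwhite t).2 s hst this.symm
  have hdiag : ∀ t : Fin k, (genLaplacian R G).submatrix a b t t = -1 := by
    intro t
    have hne : a t ≠ b t := (hadj t).ne
    simp [genLaplacian, Matrix.submatrix, hne, hadj t]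
  have hlow : ∀ s t : Fin k, s < t → (genLaplacian R G).submatrix a b s t = 0 := by
    intro s t hst
    simp [genLaplacian, Matrix.submatrix, key1 s t hst, key2 s t hst]
  have hdet : ((genLaplacian R G).submatrix a b).det = (-1 : MvPolynomial V R) ^ k := by
    rw [Matrix.det_of_lowerTriangular _ (by intro i j h; exact hlow i j (by simpa using h))]
    rw [Finset.prod_congr rfl (fun x _ => hdiag x)]
    simp
  have hinjb : Function.Injective b := by
    intro s t h
    by_contra hne
    rcases lt_or_gt_of_ne hne with hlt | hlt
    · exact (hwhite t).2 s hlt h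
    · exact (hwhite s).2 t hlt h.symm
  have hinja : Function.Injective a := by
    intro s t h
    by_contra hne
    rcases lt_or_gt_of_ne hne with hlt | hlt
    · exact key2 s t hlt (h ▸ hadj t)
    · exact key2 t s hlt (h ▸ hadj s)
  refine ⟨hdiag, hlow, ?_, ?_⟩
  · rw [hdet]; rcases Nat.even_or_odd k with he | ho
    · left; exact he.neg_one_pow
    · right; exact ho.neg_one_pow
  · have hmem : ((genLaplacian R G).submatrix a b).det ∈ criticalIdeal R G k :=
      Ideal.subset_span ⟨a, b, hinja, hinjb, rfl⟩
    refine Ideal.eq_top_of_isUnit_mem _ hmem ?_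
    rw [hdet]
    exact (IsUnit.neg isUnit_one).pow k
end

section
/- For every finite simple digraph D (no loops or multiple arcs) and every commutative ring R with unity, mz(D) = |V(D)| − Z(D) ≤ γ_R(D). -/
open scoped Classical

variable {V : Type*}

/-- The generalized Laplacian matrix `L(D, X_D)` of a digraph `D`, with entries in the
polynomial ring `R[X_D]`: the `(u,v)` entry is the indeterminate `x_u` if `u = v`,
`-1` if there is an arc from `u` to `v`, and `0` otherwise. -/
noncomputable def dGenLaplacian (R : Type*) [CommRing R] (D : Digraph V) :
    Matrix V V (MvPolynomial V R) := fun u v =>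
  if u = v then MvPolynomial.X u else if D.Adj u v then -1 else 0

/-- The `i`-th critical ideal `I_i(D, X_D) ⊆ R[X_D]` of a digraph `D`. -/
noncomputable def dCriticalIdeal (R : Type*) [CommRing R] (D : Digraph V) (i : ℕ) :
    Ideal (MvPolynomial V R) :=
  minorsIdeal (dGenLaplacian R D) i

/-- The algebraic co-rank `γ_R(D)` of a digraph `D`: the largest `i` (with `0 ≤ i ≤ |V(D)|`)
such that the `i`-th critical ideal of `D` over `R` is trivial (i.e. the whole ring). -/
noncomputable def dAlgCoRank (R : Type*) [CommRing R] [Fintype V] (D : Digraph V) : ℕ :=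
  sSup {i | i ≤ Fintype.card V ∧ dCriticalIdeal R D i = ⊤}

/-- `A ∈ S_R(D)`: `A` is a matrix over `R`, indexed by the vertices of `D`, whose
off-diagonal `(u,v)` entry is nonzero iff there is an arc from `u` to `v` (the diagonal is
free). -/
def IsDigraphMatrix {R : Type*} [CommRing R] (D : Digraph V) (A : Matrix V V R) : Prop :=
  ∀ u v : V, u ≠ v → (A u v ≠ 0 ↔ D.Adj u v)

/-- The minimum rank `mr_R(D)` of a digraph: the smallest rank among matrices in `S_R(D)`. -/
noncomputable def dMinRank (R : Type*) [CommRing R] (D : Digraph V) : ℕ :=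
  sInf {k | ∃ A : Matrix V V R, IsDigraphMatrix D A ∧ ringRank A = k}

/-- `a, b : Fin k → V` form a chronological list of forces for the zero forcing game on the
digraph `D` started with the vertices of `B` blue: at step `t` the force `a t → b t` is
performed, which requires that `a t` is blue, that `b t` is a white out-neighbor of `a t`,
and that every white out-neighbor of `a t` equals `b t`. -/
def dIsChronList (D : Digraph V) (B : Set V) {k : ℕ} (a b : Fin k → V) : Prop :=
  (∀ t, D.Adj (a t) (b t)) ∧
  (∀ t, a t ∈ B ∨ ∃ s, s < t ∧ b s = a t) ∧
  (∀ t, b t ∉ B ∧ ∀ s, s < t → b s ≠ b t) ∧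
  (∀ t z, D.Adj (a t) z → z ∉ B → (∀ s, s < t → b s ≠ z) → z = b t)

/-- `B` is a zero forcing set of the digraph `D`: starting with exactly `B` blue, there is a
sequence of forces turning every vertex of `D` blue. -/
def dIsZeroForcingSet (D : Digraph V) (B : Set V) : Prop :=
  ∃ (k : ℕ) (a b : Fin k → V), dIsChronList D B a b ∧ ∀ v : V, v ∈ B ∨ ∃ t, b t = v

/-- The zero forcing number `Z(D)`: the minimum cardinality of a zero forcing set of `D`. -/
noncomputable def dZeroForcingNumber [Fintype V] (D : Digraph V) : ℕ :=
  sInf {m | ∃ B : Finset V, B.card = m ∧ dIsZeroForcingSet D ↑B}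

/-- `mz(D) = |V(D)| - Z(D)`. -/
noncomputable def dmz [Fintype V] (D : Digraph V) : ℕ :=
  Fintype.card V - dZeroForcingNumber D


lemma chron_aux {V : Type*} [Fintype V] (D : Digraph V)
    (hloopless : ∀ v : V, ¬ D.Adj v v) (R : Type*) [CommRing R]
    (B : Finset V) (hB : dIsZeroForcingSet D ↑B) :
    Fintype.card V - B.card ≤ Fintype.card V ∧
      dCriticalIdeal R D (Fintype.card V - B.card) = ⊤ := by
  refine ⟨Nat.sub_le _ _, ?_⟩
  obtain ⟨k, a, b, ⟨hadj, hblue, hwhite, hforce⟩, hcover⟩ := hB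
  -- b is injective
  have hbinj : Function.Injective b := by
    intro s t hst
    by_contra hne
    rcases lt_or_gt_of_ne (fun h : s = t => hne h) with h | h
    · exact (hwhite t).2 s h hst
    · exact (hwhite s).2 t h hst.symm
  -- a is injective
  have hainj : Function.Injective a := by
    intro s t hst
    by_contra hne
    have key : ∀ s t : Fin k, s < t → a s = a t → False := by
      intro s t h heq
      have h1 : D.Adj (a s) (b t) := heq ▸ hadj t
      have h2 : (b t : V) ∉ (↑B : Set V) := (hwhite t).1
      have h3 : ∀ r, r < s → b r ≠ b t := fun r hr => (hwhite t).2 r (hr.trans h)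
      have := hforce s (b t) h1 h2 h3
      exact (hwhite t).2 s h this.symm
    rcases lt_or_gt_of_ne (fun h : s = t => hne h) with h | h
    · exact key s t h hst
    · exact key t s h hst.symm
  -- image of b is exactly the complement of B
  have himg : Finset.univ.image b = Bᶜ := by
    apply Finset.Subset.antisymm
    · intro v hv
      simp only [Finset.mem_image] at hv
      obtain ⟨t, _, rfl⟩ := hv
      simpa using (hwhite t).1
    · intro v hv
      rcases hcover v with h | ⟨t, rfl⟩
      · simp only [Finset.mem_compl] at hv; exact absurd h hv
      · exact Finset.mem_image.2 ⟨t, Finset.mem_univ _, rfl⟩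
  have hk : k = Fintype.card V - B.card := by
    have := congrArg Finset.card himg
    rwa [Finset.card_image_of_injective _ hbinj, Finset.card_univ, Finset.card_compl, Fintype.card_fin] at this
  subst hk
  -- the key determinant
  set M := (dGenLaplacian R D).submatrix a b with hM
  have hdiag : ∀ t, M t t = -1 := by
    intro t
    have hne : a t ≠ b t := by
      intro h
      exact hloopless (b t) (h ▸ hadj t)
    simp [hM, Matrix.submatrix_apply, dGenLaplacian, hne, hadj t]
  have hzero : ∀ s t, s < t → M s t = 0 := by
    intro s t hst
    have hne : a s ≠ b t := by
      intro h
      rcases hblue s with h1 | ⟨r, hr, hrb⟩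
      · exact (hwhite t).1 (by simpa [← h] using h1)
      · exact (hwhite t).2 r (hr.trans hst) (hrb.trans h)
    have hnadj : ¬ D.Adj (a s) (b t) := by
      intro hA
      have h3 : ∀ r, r < s → b r ≠ b t := fun r hr => (hwhite t).2 r (hr.trans hst)
      have := hforce s (b t) hA (hwhite t).1 h3
      exact (hwhite t).2 s hst this.symm
    simp [hM, Matrix.submatrix_apply, dGenLaplacian, hne, hnadj]
  have hdet : M.det = (-1) ^ (Fintype.card V - B.card) := by
    have htri : M.BlockTriangular OrderDual.toDual := by
      intro i j hij
      exact hzero i j (by simpa using hij)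
    rw [Matrix.det_of_lowerTriangular M htri]
    simp [hdiag]
  have hmem : M.det ∈ dCriticalIdeal R D (Fintype.card V - B.card) :=
    Ideal.subset_span ⟨a, b, hainj, hbinj, rfl⟩
  exact Ideal.eq_top_of_isUnit_mem _ hmem (hdet ▸ (IsUnit.neg isUnit_one).pow _)

/-- For every finite simple digraph `D` (no loops or multiple arcs) and
every commutative ring `R` with unity, `mz(D) = |V(D)| - Z(D) ≤ γ_R(D)`. -/
theorem dmz_le_dAlgCoRank {V : Type*} [Fintype V] (D : Digraph V)
    (hloopless : ∀ v : V, ¬ D.Adj v v) (R : Type*) [CommRing R] :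
    dmz D = Fintype.card V - dZeroForcingNumber D ∧ dmz D ≤ dAlgCoRank R D := by
  refine ⟨rfl, ?_⟩
  have hne : dZeroForcingNumber D ∈
      {m | ∃ B : Finset V, B.card = m ∧ dIsZeroForcingSet D ↑B} := by
    apply Nat.sInf_mem
    refine ⟨Fintype.card V, Finset.univ, Finset.card_univ, 0, Fin.elim0, Fin.elim0,
      ⟨fun t => t.elim0, fun t => t.elim0, fun t => t.elim0, fun t => t.elim0⟩,
      fun v => Or.inl (by simp)⟩
  obtain ⟨B, hBcard, hBzf⟩ := hne
  obtain ⟨h1, h2⟩ := chron_aux D hloopless R B hBzf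
  have hdmz : dmz D = Fintype.card V - B.card := by rw [dmz, hBcard]
  rw [hdmz]
  exact le_csSup ⟨Fintype.card V, fun i hi => hi.1⟩ ⟨h1, h2⟩
end

section
/- Let G be a finite simple graph on n vertices and R a commutative ring with unity. If the variety V_R(I_{r+1}(G,X_G)) over R of the (r+1)-st critical ideal of G is nonempty, then mr_R(G) ≤ r. -/
open scoped Classical

variable {V : Type*}

lemma minors_zero_of_ge {V : Type*} {R : Type*} [CommRing R] (A : Matrix V V R) (r : ℕ)
    (h : ∀ f g : Fin (r + 1) → V, Function.Injective f → Function.Injective g →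
      (A.submatrix f g).det = 0) :
    ∀ k, r + 1 ≤ k → ∀ f g : Fin k → V, Function.Injective f → Function.Injective g →
      (A.submatrix f g).det = 0 := by
  intro k hk
  induction k, hk using Nat.le_induction with
  | base => exact h
  | succ n hn ih =>
    intro f g hf hg
    rw [Matrix.det_succ_row_zero]
    refine Finset.sum_eq_zero fun j _ => ?_
    have hz : ((A.submatrix f g).submatrix Fin.succ j.succAbove).det = 0 := by
      rw [Matrix.submatrix_submatrix]
      exact ih _ _ (hf.comp (Fin.succ_injective n)) (hg.comp Fin.succAbove_right_injective)
    rw [hz, mul_zero]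

/-- If the variety over `R` of the `(r+1)`-st critical ideal of `G` is
nonempty, i.e. there is a point `a ∈ R^{V(G)}` at which every polynomial of
`I_{r+1}(G, X_G)` vanishes, then `mr_R(G) ≤ r`. -/
theorem minRank_le_of_variety_nonempty {V : Type*} [Fintype V] (G : SimpleGraph V)
    (R : Type*) [CommRing R] (r : ℕ)
    (h : ∃ a : V → R, ∀ f ∈ criticalIdeal R G (r + 1), MvPolynomial.eval a f = 0) :
    minRank R G ≤ r := by
  obtain ⟨a, ha⟩ := h
  rcases subsingleton_or_nontrivial R with hR | hR
  · -- trivial ring: every ringRank is 0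
    unfold minRank
    by_cases hS : {k | ∃ A : Matrix V V R, IsGraphMatrix G A ∧ ringRank A = k}.Nonempty
    · obtain ⟨k, A, hA, hk⟩ := hS
      have hrk : ringRank A = 0 := by
        unfold ringRank
        have : {k | ∃ f g : Fin k → V, Function.Injective f ∧ Function.Injective g ∧
            (A.submatrix f g).det ≠ 0 ∧ (A.submatrix f g).det ∈ nonZeroDivisors R} = ∅ := by
          ext m
          simp only [Set.mem_setOf_eq, Set.mem_empty_iff_false, iff_false]
          rintro ⟨f, g, -, -, hne, -⟩
          exact hne (Subsingleton.elim _ _)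
        rw [this, csSup_empty]
        rfl
      have h0 : 0 ∈ {k | ∃ A : Matrix V V R, IsGraphMatrix G A ∧ ringRank A = k} :=
        ⟨A, hA, hrk⟩
      exact le_trans (Nat.sInf_le h0) (Nat.zero_le r)
    · rw [Set.not_nonempty_iff_eq_empty] at hS
      rw [hS, Nat.sInf_empty]
      exact Nat.zero_le r
  · set A : Matrix V V R := evalLaplacian G a with hAdef
    have hmap : A = (genLaplacian R G).map (MvPolynomial.eval a) := by
      ext u v
      simp only [hAdef, evalLaplacian, genLaplacian, Matrix.map_apply]
      split_ifs <;> simp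
    -- all (r+1)-minors of A vanish
    have hminor : ∀ f g : Fin (r + 1) → V, Function.Injective f → Function.Injective g →
        (A.submatrix f g).det = 0 := by
      intro f g hf hg
      have : (A.submatrix f g).det =
          MvPolynomial.eval a (((genLaplacian R G).submatrix f g).det) := by
        rw [hmap]
        rw [show ((genLaplacian R G).map (MvPolynomial.eval a)).submatrix f g
            = ((genLaplacian R G).submatrix f g).map (MvPolynomial.eval a) from rfl]
        exact (RingHom.map_det (MvPolynomial.eval a) _).symm
      rw [this]
      apply ha
      exact Ideal.subset_span ⟨f, g, hf, hg, rfl⟩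
    -- A is a graph matrix
    have hA : IsGraphMatrix G A := by
      constructor
      · ext u v
        simp only [Matrix.transpose_apply, hAdef, evalLaplacian]
        by_cases huv : u = v
        · subst huv; simp
        · have : v ≠ u := fun hh => huv hh.symm
          simp only [if_neg huv, if_neg this]
          by_cases hadj : G.Adj u v
          · rw [if_pos hadj, if_pos hadj.symm]
          · rw [if_neg hadj, if_neg (fun hh => hadj hh.symm)]
      · intro u v huv
        simp only [hAdef, evalLaplacian, if_neg huv]
        by_cases hadj : G.Adj u v
        · simp [hadj]
        · simp [hadj]
    -- ringRank A ≤ r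
    have hrk : ringRank A ≤ r := by
      apply csSup_le'
      rintro k ⟨f, g, hf, hg, hne, -⟩
      by_contra hk
      push_neg at hk
      exact hne (minors_zero_of_ge A r hminor k hk f g hf hg)
    calc minRank R G ≤ ringRank A := Nat.sInf_le ⟨A, hA, rfl⟩
      _ ≤ r := hrk
end

section
/- Let R be an algebraically closed field. Then for every finite simple graph G, mr_R(G) ≤ γ_R(G). -/
open scoped Classical

variable {V : Type*}

/-!
Put `γ = γ_R(G)`. The critical ideal `I_{γ+1}` is proper: either `γ + 1 ≤ |V|` and maximality
of `γ` applies, or there are no `(γ+1)`-minors at all and the ideal is zero. By the weak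
Nullstellensatz its generators have a common zero `d ∈ R^V`, so every `(γ+1)`-minor of `L(G, d)`
vanishes, hence (Laplace expansion) so does every larger minor. As `L(G, d) ∈ S_R(G)`, this
gives `mr_R(G) ≤ rank L(G, d) ≤ γ`.
-/

theorem MvPolynomial.exists_le_ker_eval_of_ne_top {K σ : Type*} [Field K] [IsAlgClosed K]
    [Finite σ] {I : Ideal (MvPolynomial σ K)} (hI : I ≠ ⊤) :
    ∃ x : σ → K, I ≤ RingHom.ker (MvPolynomial.eval x) := by
  obtain ⟨m, hm, hIm⟩ := I.exists_le_maximal hI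
  obtain ⟨x, rfl⟩ := MvPolynomial.eq_vanishingIdeal_singleton_of_isMaximal K hm
  refine ⟨x, fun p hp => ?_⟩
  rw [RingHom.mem_ker, ← MvPolynomial.coe_aeval_eq_eval]
  exact (MvPolynomial.mem_vanishingIdeal_singleton_iff x p).1 (hIm hp)

section Minors

variable {S T : Type*} [CommRing S] [CommRing T]

theorem minorsIdeal_succ_le (M : Matrix V V S) (n : ℕ) :
    minorsIdeal M (n + 1) ≤ minorsIdeal M n := by
  refine Ideal.span_le.2 ?_
  rintro _ ⟨f, g, hf, hg, rfl⟩
  rw [Matrix.det_succ_row_zero]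
  refine Ideal.sum_mem _ fun j _ => Ideal.mul_mem_left _ _ (Ideal.subset_span ?_)
  exact ⟨f ∘ Fin.succ, g ∘ j.succAbove, hf.comp (Fin.succ_injective n),
    hg.comp Fin.succAbove_right_injective, by rw [Matrix.submatrix_submatrix]⟩

theorem minorsIdeal_antitone (M : Matrix V V S) : Antitone (minorsIdeal M) :=
  antitone_nat_of_succ_le (minorsIdeal_succ_le M)

theorem minorsIdeal_map (M : Matrix V V S) (φ : S →+* T) (i : ℕ) :
    minorsIdeal (M.map φ) i = (minorsIdeal M i).map φ := by
  have hdet : ∀ f g : Fin i → V, φ (M.submatrix f g).det = ((M.map φ).submatrix f g).det :=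
    fun f g => by rw [RingHom.map_det, RingHom.mapMatrix_apply, Matrix.submatrix_map]
  rw [minorsIdeal, minorsIdeal, Ideal.map_span]
  congr 1
  ext d
  simp only [Set.mem_ofPred_eq, Set.mem_image]
  constructor
  · rintro ⟨f, g, hf, hg, rfl⟩
    exact ⟨_, ⟨f, g, hf, hg, rfl⟩, hdet f g⟩
  · rintro ⟨_, ⟨f, g, hf, hg, rfl⟩, rfl⟩
    exact ⟨f, g, hf, hg, hdet f g⟩

theorem minorsIdeal_eq_bot_of_card_lt [Fintype V] (M : Matrix V V S) {i : ℕ}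
    (hi : Fintype.card V < i) : minorsIdeal M i = ⊥ := by
  refine Ideal.span_eq_bot.2 ?_
  rintro _ ⟨f, -, hf, -, -⟩
  have := Fintype.card_le_of_injective f hf
  simp only [Fintype.card_fin] at this
  omega

theorem ringRank_le_of_minorsIdeal_eq_bot (M : Matrix V V S) {n : ℕ}
    (hM : minorsIdeal M (n + 1) = ⊥) : ringRank M ≤ n := by
  refine csSup_le' ?_
  rintro k ⟨f, g, hf, hg, hdet, -⟩
  by_contra! hnk
  have hmem : (M.submatrix f g).det ∈ minorsIdeal M (n + 1) :=
    minorsIdeal_antitone M hnk (Ideal.subset_span ⟨f, g, hf, hg, rfl⟩)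
  exact hdet (by rwa [hM, Ideal.mem_bot] at hmem)

end Minors

section Laplacian

variable {R : Type*} [CommRing R]

theorem genLaplacian_map_eval (G : SimpleGraph V) (d : V → R) :
    (genLaplacian R G).map (MvPolynomial.eval d) = evalLaplacian G d := by
  ext u v
  simp only [Matrix.map_apply, genLaplacian, evalLaplacian]
  split_ifs <;> simp

theorem isGraphMatrix_evalLaplacian [Nontrivial R] (G : SimpleGraph V) (d : V → R) :
    IsGraphMatrix G (evalLaplacian G d) := by
  refine ⟨Matrix.IsSymm.ext fun u v => ?_, fun u v huv => ?_⟩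
  · simp only [evalLaplacian, eq_comm (a := u), G.adj_comm]
    split_ifs with h <;> simp [h]
  · by_cases ha : G.Adj u v <;> simp [evalLaplacian, huv, ha]

theorem minRank_le_ringRank {G : SimpleGraph V} {A : Matrix V V R} (hA : IsGraphMatrix G A) :
    minRank R G ≤ ringRank A :=
  Nat.sInf_le ⟨A, hA, rfl⟩

theorem criticalIdeal_algCoRank_succ_ne_top [Nontrivial R] [Fintype V] (G : SimpleGraph V) :
    criticalIdeal R G (algCoRank R G + 1) ≠ ⊤ := by
  intro htop
  rcases le_or_gt (algCoRank R G + 1) (Fintype.card V) with hle | hlt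
  · have : algCoRank R G + 1 ≤ algCoRank R G :=
      le_csSup ⟨Fintype.card V, fun i hi => hi.1⟩ ⟨hle, htop⟩
    omega
  · rw [criticalIdeal, minorsIdeal_eq_bot_of_card_lt _ hlt] at htop
    exact bot_ne_top htop

end Laplacian

/-- If `R` is an algebraically closed field, then for every finite simple
graph `G` we have `mr_R(G) ≤ γ_R(G)`. -/
theorem minRank_le_algCoRank_of_isAlgClosed (R : Type*) [Field R] [IsAlgClosed R]
    {V : Type*} [Fintype V] (G : SimpleGraph V) :
    minRank R G ≤ algCoRank R G := by
  obtain ⟨d, hd⟩ :=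
    MvPolynomial.exists_le_ker_eval_of_ne_top (criticalIdeal_algCoRank_succ_ne_top (R := R) G)
  have hminors : minorsIdeal (evalLaplacian G d) (algCoRank R G + 1) = ⊥ := by
    rw [← genLaplacian_map_eval, minorsIdeal_map, Ideal.map_eq_bot_iff_le_ker]
    exact hd
  calc minRank R G ≤ ringRank (evalLaplacian G d) :=
        minRank_le_ringRank (isGraphMatrix_evalLaplacian G d)
    _ ≤ algCoRank R G := ringRank_le_of_minorsIdeal_eq_bot _ hminors
end

section
/- For every finite tree T on n vertices, ν₂(T) = n − P(T); that is, the 2-matching number of T equals n minus the path cover number of T. -/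
open scoped Classical

variable {V : Type*}

/-- A 2-matching of a graph `G`: a set `M` of edges of `G` such that every vertex of `G` is
incident to at most two edges of `M`. -/
def IsTwoMatching (G : SimpleGraph V) (M : Finset (Sym2 V)) : Prop :=
  ↑M ⊆ G.edgeSet ∧ ∀ v : V, (M.filter (fun e => v ∈ e)).card ≤ 2

/-- The 2-matching number `ν₂(G)`: the maximum number of edges in a 2-matching of `G`. -/
noncomputable def twoMatchingNumber [Fintype V] (G : SimpleGraph V) : ℕ :=
  sSup {k | ∃ M : Finset (Sym2 V), IsTwoMatching G M ∧ M.card = k}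

/-- `S` induces a path in `G`: the subgraph of `G` induced on `S` is (isomorphic to) a path
graph. -/
def IsInducedPath (G : SimpleGraph V) (S : Set V) : Prop :=
  ∃ n : ℕ, Nonempty (G.induce S ≃g SimpleGraph.pathGraph n)

/-- `P` is a path cover of `G`: a family of vertex-disjoint induced paths of `G` whose
vertex sets together cover all of `V(G)` (every vertex lies in exactly one member of `P`). -/
def IsPathCover (G : SimpleGraph V) (P : Finset (Set V)) : Prop :=
  (∀ S ∈ P, IsInducedPath G S) ∧ ∀ v : V, ∃! S : Set V, S ∈ P ∧ v ∈ S

/-- The path cover number `P(G)`: the minimum number of vertex-disjoint induced paths of `G`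
needed to cover all vertices of `G`. -/
noncomputable def pathCoverNumber [Fintype V] (G : SimpleGraph V) : ℕ :=
  sInf {k | ∃ P : Finset (Set V), IsPathCover G P ∧ P.card = k}

/-
A 2-matching `M` is the edge set of a spanning subgraph `H` of maximum degree at most 2, and `H`
is a forest since `T` is. A longest path inside a component of `H` spans it: it cannot be
extended at its ends, and its inner vertices already have two neighbours on it. A connected
subgraph of a forest is induced, so the components of `H` are induced paths of `T`, and one with
`k` vertices carries at most `k - 1` edges of `M`; they form a path cover with `#P + #M ≤ n`.
Conversely, the edges of `T` inside the members of a path cover `P` form a 2-matching (a vertex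
has degree at most 2 in its path) with at least `n - #P` edges, since each path is connected.
-/

open Finset

namespace SimpleGraph

variable {G : SimpleGraph V}

theorem degree_pathGraph_le_two {n : ℕ} (i : Fin n) : (pathGraph n).degree i ≤ 2 := by
  rw [← card_neighborFinset_eq_degree]
  refine (card_le_card_of_injOn (fun j : Fin n ↦ (j : ℕ)) (t := {(i : ℕ) + 1, (i : ℕ) - 1})
    (fun j hj ↦ ?_) (fun j _ j' _ h ↦ Fin.ext h)).trans card_le_two
  rw [mem_coe, mem_neighborFinset, pathGraph_adj] at hj
  simp only [coe_insert, coe_singleton, Set.mem_insert_iff, Set.mem_singleton_iff]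
  lia

theorem le_card_edgeFinset_pathGraph_add_one (n : ℕ) : n ≤ #(pathGraph n).edgeFinset + 1 := by
  cases n with
  | zero => lia
  | succ k =>
    have := (pathGraph_connected k).card_vert_le_card_edgeSet_add_one
    rwa [Nat.card_eq_fintype_card, Fintype.card_fin, Nat.card_eq_card_toFinset] at this

theorem card_filter_mem_edgeFinset_inter_sym2 [Fintype V] (S : Set V) {v : V} (hv : v ∈ S) :
    #{e ∈ G.edgeFinset ∩ S.toFinset.sym2 | v ∈ e} = (G.induce S).degree ⟨v, hv⟩ := by
  rw [← map_edgeFinset_induce, filter_map, card_map, ← card_incidenceFinset_eq_degree,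
    incidenceFinset_eq_filter]
  congr 1
  refine filter_congr fun e _ ↦ ?_
  simp [Sym2.mem_map, hv]

theorem IsAcyclic.isInduced_of_connected (hG : G.IsAcyclic) {H : G.Subgraph}
    (hH : H.Connected) : H.IsInduced := by
  intro u hu v hv huv
  obtain ⟨q, hq⟩ := (hH.preconnected ⟨u, hu⟩ ⟨v, hv⟩).exists_isPath
  have hlen : (q.map H.hom).length = 1 :=
    congrArg (fun p : G.Path u v => p.1.length)
      ((hG.subsingleton_path u v).elim ⟨_, hq.map Subtype.val_injective⟩ (Path.singleton huv))
  exact q.adj_of_length_eq_one (by rwa [Walk.length_map] at hlen)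

theorem IsAcyclic.isInducedPath_verts_toSubgraph (hG : G.IsAcyclic) {u v : V} {p : G.Walk u v}
    (hp : p.IsPath) : IsInducedPath G p.toSubgraph.verts := by
  have hind := (hG.isInduced_of_connected p.toSubgraph_connected).induce_top_verts
  rw [IsInducedPath, induce_eq_coe_induce_top]
  exact ⟨p.length + 1, ⟨(hind ▸ hp.pathGraphIsoToSubgraph).symm⟩⟩

theorem ConnectedComponent.exists_isPath_forall_length_le [Finite V] (c : G.ConnectedComponent) :
    ∃ (u w : V) (p : G.Walk u w), p.IsPath ∧ u ∈ c.supp ∧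
      ∀ (u' w' : V) (q : G.Walk u' w'), q.IsPath → u' ∈ c.supp → q.length ≤ p.length := by
  have := Fintype.ofFinite V
  let s := {n | ∃ (u w : V) (p : G.Walk u w), p.IsPath ∧ u ∈ c.supp ∧ p.length = n}
  have hs : s.Finite := (Set.finite_lt_nat (Fintype.card V)).subset
    fun n ⟨_, _, _, hp, _, hn⟩ ↦ hn ▸ hp.length_lt
  obtain ⟨u, hu⟩ := c.nonempty_supp
  obtain ⟨_, ⟨⟨u, w, p, hp, hu, rfl⟩, hmax⟩⟩ :=
    hs.exists_maximal ⟨0, ⟨u, u, Walk.nil, Walk.IsPath.nil, hu, rfl⟩⟩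
  refine ⟨u, w, p, hp, hu, fun u' w' q hq hu' ↦ ?_⟩
  have := hmax ⟨u', w', q, hq, hu', rfl⟩
  lia

theorem Walk.IsPath.mem_support_of_adj_of_maximal [Fintype V] [DecidableRel G.Adj]
    (hdeg : ∀ v, G.degree v ≤ 2) {c : G.ConnectedComponent} {u w : V} {p : G.Walk u w}
    (hp : p.IsPath) (hu : u ∈ c.supp)
    (hmax : ∀ (u' w' : V) (q : G.Walk u' w'), q.IsPath → u' ∈ c.supp → q.length ≤ p.length)
    {v x : V} (hv : v ∈ p.support) (hvx : G.Adj v x) : x ∈ p.support := by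
  by_contra hx
  have hxc : x ∈ c.supp := by
    rw [ConnectedComponent.mem_supp_iff] at hu ⊢
    rw [← hu, ← ConnectedComponent.connectedComponentMk_eq_of_adj hvx, ConnectedComponent.eq]
    exact (p.takeUntil v hv).reachable.symm
  obtain ⟨k, rfl, hk⟩ := Walk.mem_support_iff_exists_getVert.mp hv
  rcases Nat.eq_zero_or_pos k with rfl | hk0
  · have := hmax _ _ (Walk.cons hvx.symm (p.copy p.getVert_zero.symm rfl))
      (by simpa using ⟨hp, hx⟩) hxc
    simp at this
  rcases hk.eq_or_lt with rfl | hklt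
  · have := hmax _ _ (Walk.cons hvx.symm (p.copy rfl p.getVert_length.symm).reverse)
      (by simpa using ⟨hp, hx⟩) hxc
    simp at this
  · -- an interior vertex already has two neighbours on `p`, and no room for more
    have heq := Set.eq_of_subset_of_ncard_le (p.toSubgraph.neighborSet_subset (p.getVert k)) (by
      rw [hp.ncard_neighborSet_toSubgraph_internal_eq_two hk0.ne' hklt, ← coe_neighborFinset,
        Set.ncard_coe_finset, card_neighborFinset_eq_degree]
      exact hdeg _) (G.neighborSet _).toFinite
    have hadj : p.toSubgraph.Adj (p.getVert k) x := by
      rw [← Subgraph.mem_neighborSet, heq]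
      exact hvx
    exact hx (p.mem_verts_toSubgraph.mp hadj.snd_mem)

theorem IsAcyclic.exists_isPath_verts_toSubgraph_eq_supp [Fintype V] [DecidableRel G.Adj]
    (hG : G.IsAcyclic) (hdeg : ∀ v, G.degree v ≤ 2) (c : G.ConnectedComponent) :
    ∃ (u w : V) (p : G.Walk u w), p.IsPath ∧ p.toSubgraph.verts = c.supp := by
  obtain ⟨u, w, p, hp, hu, hmax⟩ := c.exists_isPath_forall_length_le
  have hconn := p.toSubgraph_connected
  obtain ⟨c', hc'⟩ := hconn.exists_verts_eq_connectedComponentSupp fun v hv x hvx ↦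
    hG.isInduced_of_connected hconn hv
      (p.mem_verts_toSubgraph.mpr (hp.mem_support_of_adj_of_maximal hdeg hu hmax
        (p.mem_verts_toSubgraph.mp hv) hvx)) hvx
  have hc : c' = c := (hc' ▸ p.start_mem_verts_toSubgraph : u ∈ c'.supp).symm.trans hu
  exact ⟨u, w, p, hp, hc ▸ hc'⟩

end SimpleGraph

open SimpleGraph

section

variable {G : SimpleGraph V}

theorem IsPathCover.eq_of_mem {P : Finset (Set V)} (hP : IsPathCover G P) {S S' : Set V}
    (hS : S ∈ P) (hS' : S' ∈ P) {v : V} (hv : v ∈ S) (hv' : v ∈ S') : S = S' :=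
  (hP.2 v).unique ⟨hS, hv⟩ ⟨hS', hv'⟩

theorem IsPathCover.sum_ncard [Fintype V] {P : Finset (Set V)} (hP : IsPathCover G P) :
    ∑ S ∈ P, S.ncard = Fintype.card V := by
  simp_rw [Set.ncard_eq_toFinset_card']
  rw [← card_univ, ← card_biUnion fun S hS S' hS' hne ↦ Set.disjoint_toFinset.mpr <|
    Set.disjoint_left.mpr fun v hv hv' ↦ hne (hP.eq_of_mem hS hS' hv hv')]
  congr 1
  ext v
  obtain ⟨S, hS, hv⟩ := (hP.2 v).exists
  simpa using ⟨S, hS, hv⟩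

theorem IsInducedPath.degree_induce_le_two [Fintype V] {S : Set V} (h : IsInducedPath G S)
    (x : S) : (G.induce S).degree x ≤ 2 := by
  obtain ⟨n, ⟨φ⟩⟩ := h
  rw [← φ.degree_eq]
  exact degree_pathGraph_le_two _

theorem IsInducedPath.ncard_le_card_edgeFinset_induce_add_one [Fintype V] {S : Set V}
    (h : IsInducedPath G S) : S.ncard ≤ #(G.induce S).edgeFinset + 1 := by
  obtain ⟨n, ⟨φ⟩⟩ := h
  rw [φ.card_edgeFinset_eq, ← Nat.card_coe_set_eq, Nat.card_congr φ.toEquiv,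
    Nat.card_eq_fintype_card, Fintype.card_fin]
  exact le_card_edgeFinset_pathGraph_add_one n

theorem IsPathCover.exists_isTwoMatching [Fintype V] {P : Finset (Set V)} (hP : IsPathCover G P) :
    ∃ M : Finset (Sym2 V), IsTwoMatching G M ∧ Fintype.card V ≤ #M + #P := by
  set E : Set V → Finset (Sym2 V) := fun S ↦ G.edgeFinset ∩ S.toFinset.sym2
  have hE : ∀ {S e v}, e ∈ E S → v ∈ e → v ∈ S := fun he hv ↦ by
    simpa using mem_sym2_iff.mp (mem_inter.mp he).2 _ hv
  have hdisj : (P : Set (Set V)).PairwiseDisjoint E := fun S hS S' hS' hne ↦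
    disjoint_left.mpr fun e he he' ↦ hne <| by
      induction e using Sym2.ind with | _ a b =>
      exact hP.eq_of_mem hS hS' (hE he (Sym2.mem_mk_left a b)) (hE he' (Sym2.mem_mk_left a b))
  refine ⟨P.biUnion E, ⟨fun e he ↦ ?_, fun v ↦ ?_⟩, ?_⟩
  · obtain ⟨S, -, he⟩ := mem_biUnion.mp he
    exact mem_edgeFinset.mp (mem_inter.mp he).1
  · obtain ⟨S, hS, hv⟩ := (hP.2 v).exists
    have hsub : {e ∈ P.biUnion E | v ∈ e} ⊆ {e ∈ E S | v ∈ e} := fun e he ↦ by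
      obtain ⟨he, hve⟩ := mem_filter.mp he
      obtain ⟨S', hS', he⟩ := mem_biUnion.mp he
      exact mem_filter.mpr ⟨hP.eq_of_mem hS' hS (hE he hve) hv ▸ he, hve⟩
    refine (card_le_card hsub).trans ?_
    rw [card_filter_mem_edgeFinset_inter_sym2 S hv]
    exact (hP.1 S hS).degree_induce_le_two _
  · rw [card_biUnion hdisj, ← hP.sum_ncard, card_eq_sum_ones, ← sum_add_distrib]
    refine sum_le_sum fun S hS ↦ ?_
    simp only [E]
    rw [← map_edgeFinset_induce, card_map]
    exact (hP.1 S hS).ncard_le_card_edgeFinset_induce_add_one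

theorem SimpleGraph.IsAcyclic.isPathCover_image_supp [Fintype V] (hG : G.IsAcyclic)
    {H : SimpleGraph V} [DecidableRel H.Adj] (hHG : H ≤ G)
    (hspan : ∀ c : H.ConnectedComponent,
      ∃ (u w : V) (p : H.Walk u w), p.IsPath ∧ p.toSubgraph.verts = c.supp) :
    IsPathCover G (univ.image fun c : H.ConnectedComponent ↦ c.supp) := by
  refine ⟨fun S hS ↦ ?_, fun v ↦ ⟨(H.connectedComponentMk v).supp, ⟨by simp, rfl⟩, ?_⟩⟩
  · obtain ⟨c, -, rfl⟩ := mem_image.mp hS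
    obtain ⟨u, w, p, hp, hverts⟩ := hspan c
    have := hG.isInducedPath_verts_toSubgraph (hp.mapLe hHG)
    rwa [Walk.verts_toSubgraph, Walk.support_mapLe_eq_support, ← Walk.verts_toSubgraph,
      hverts] at this
  · rintro S ⟨hS, hv⟩
    obtain ⟨c, -, rfl⟩ := mem_image.mp hS
    rw [← hv]

theorem SimpleGraph.IsAcyclic.exists_isPathCover_card_add_ncard_edgeSet_le [Fintype V]
    (hG : G.IsAcyclic) {H : SimpleGraph V} [DecidableRel H.Adj] (hHG : H ≤ G)
    (hdeg : ∀ v, H.degree v ≤ 2) :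
    ∃ P : Finset (Set V), IsPathCover G P ∧ #P + H.edgeSet.ncard ≤ Fintype.card V := by
  have hH : H.IsAcyclic := hG.anti hHG
  have hspan := hH.exists_isPath_verts_toSubgraph_eq_supp hdeg
  have hcover := hG.isPathCover_image_supp hHG hspan
  choose u w p hp hverts using hspan
  have hcard_supp : ∀ c : H.ConnectedComponent, c.supp.ncard = (p c).length + 1 := by
    intro c
    rw [← hverts, Walk.verts_toSubgraph, ← List.coe_toFinset, Set.ncard_coe_finset,
      List.toFinset_card_of_nodup (hp c).support_nodup, Walk.length_support]
  have hE_le : H.edgeSet.ncard ≤ ∑ c, (p c).length := by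
    rw [← coe_edgeFinset, Set.ncard_coe_finset]
    have hsub : H.edgeFinset ⊆ univ.biUnion fun c ↦ (p c).edges.toFinset := by
      intro e he
      induction e using Sym2.ind with | _ a b =>
      have hab : H.Adj a b := mem_edgeFinset.mp he
      have ha : a ∈ (p (H.connectedComponentMk a)).toSubgraph.verts := by rw [hverts]; rfl
      have hb : b ∈ (p (H.connectedComponentMk a)).toSubgraph.verts := by
        rw [hverts]; exact (ConnectedComponent.connectedComponentMk_eq_of_adj hab).symm
      simpa using ⟨_, Walk.adj_toSubgraph_iff_mem_edges.mp
        (hH.isInduced_of_connected (Walk.toSubgraph_connected _) ha hb hab)⟩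
    refine (card_le_card hsub).trans (card_biUnion_le.trans (sum_le_sum fun c _ ↦ ?_))
    exact (List.toFinset_card_le _).trans (Walk.length_edges _).le
  refine ⟨_, hcover, ?_⟩
  have hsum := hcover.sum_ncard
  rw [sum_image fun c _ c' _ h ↦ ConnectedComponent.supp_injective h] at hsum
  rw [card_image_of_injective _ ConnectedComponent.supp_injective, card_univ]
  simp only [hcard_supp, sum_add_distrib, sum_const, card_univ, smul_eq_mul, mul_one] at hsum
  lia

theorem IsTwoMatching.degree_fromEdgeSet_le_two [Fintype V] {M : Finset (Sym2 V)}
    (hM : IsTwoMatching G M) (v : V) : (fromEdgeSet (M : Set (Sym2 V))).degree v ≤ 2 := by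
  rw [← card_incidenceFinset_eq_degree]
  refine (card_le_card fun e he ↦ ?_).trans (hM.2 v)
  rw [mem_incidenceFinset, incidenceSet, edgeSet_fromEdgeSet] at he
  exact mem_filter.mpr ⟨he.1.1, he.2⟩

theorem IsTwoMatching.edgeSet_fromEdgeSet {M : Finset (Sym2 V)} (hM : IsTwoMatching G M) :
    (fromEdgeSet (M : Set (Sym2 V))).edgeSet = M := by
  rw [SimpleGraph.edgeSet_fromEdgeSet, sdiff_eq_left, Set.disjoint_left]
  exact fun e he ↦ G.not_isDiag_of_mem_edgeSet (hM.1 he)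

theorem IsTwoMatching.exists_isPathCover [Fintype V] (hG : G.IsAcyclic) {M : Finset (Sym2 V)}
    (hM : IsTwoMatching G M) :
    ∃ P : Finset (Set V), IsPathCover G P ∧ #P + #M ≤ Fintype.card V := by
  have := hG.exists_isPathCover_card_add_ncard_edgeSet_le
    (fun a b hab ↦ hM.1 ((fromEdgeSet_adj _).mp hab).1) hM.degree_fromEdgeSet_le_two
  rwa [hM.edgeSet_fromEdgeSet, Set.ncard_coe_finset] at this

theorem bddAbove_card_isTwoMatching [Fintype V] (G : SimpleGraph V) :
    BddAbove {k | ∃ M : Finset (Sym2 V), IsTwoMatching G M ∧ #M = k} :=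
  ⟨Fintype.card (Sym2 V), by rintro k ⟨M, -, rfl⟩; exact card_le_univ M⟩

theorem IsTwoMatching.card_le_twoMatchingNumber [Fintype V] {M : Finset (Sym2 V)}
    (hM : IsTwoMatching G M) : #M ≤ twoMatchingNumber G :=
  le_csSup (bddAbove_card_isTwoMatching G) ⟨M, hM, rfl⟩

theorem exists_isTwoMatching_card_eq_twoMatchingNumber [Fintype V] (G : SimpleGraph V) :
    ∃ M : Finset (Sym2 V), IsTwoMatching G M ∧ #M = twoMatchingNumber G := by
  have hne : {k | ∃ M : Finset (Sym2 V), IsTwoMatching G M ∧ #M = k}.Nonempty :=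
    ⟨0, ∅, ⟨by simp, by simp⟩, rfl⟩
  exact Nat.sSup_mem hne (bddAbove_card_isTwoMatching G)

theorem IsPathCover.pathCoverNumber_le [Fintype V] {P : Finset (Set V)} (hP : IsPathCover G P) :
    pathCoverNumber G ≤ #P :=
  Nat.sInf_le ⟨P, hP, rfl⟩

theorem exists_isPathCover_card_eq_pathCoverNumber [Fintype V]
    (h : ∃ P : Finset (Set V), IsPathCover G P) :
    ∃ P : Finset (Set V), IsPathCover G P ∧ #P = pathCoverNumber G := by
  obtain ⟨P, hP⟩ := h
  have hne : {k | ∃ P : Finset (Set V), IsPathCover G P ∧ #P = k}.Nonempty := ⟨#P, P, hP, rfl⟩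
  exact Nat.sInf_mem hne

end

theorem tree_twoMatchingNumber_eq_general {V : Type*} [Fintype V] (T : SimpleGraph V)
    (hacyc : T.IsAcyclic) :
    twoMatchingNumber T = Fintype.card V - pathCoverNumber T := by
  obtain ⟨M, hM, hM_card⟩ := exists_isTwoMatching_card_eq_twoMatchingNumber T
  obtain ⟨P, hP, hPM⟩ := hM.exists_isPathCover hacyc
  obtain ⟨P₀, hP₀, hP₀_card⟩ := exists_isPathCover_card_eq_pathCoverNumber ⟨P, hP⟩
  obtain ⟨M₀, hM₀, hM₀P₀⟩ := hP₀.exists_isTwoMatching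
  have := hM₀.card_le_twoMatchingNumber
  have := hP.pathCoverNumber_le
  lia

/-- For every finite tree `T` on `n` vertices, `ν₂(T) = n - P(T)`: the
2-matching number of `T` equals `n` minus the path cover number of `T`. -/
theorem tree_twoMatchingNumber_eq {V : Type*} [Fintype V] (T : SimpleGraph V)
    (hconn : T.Connected) (hacyc : T.IsAcyclic) :
    twoMatchingNumber T = Fintype.card V - pathCoverNumber T :=
  tree_twoMatchingNumber_eq_general T hacyc
end

section
/- If G is a finite connected simple graph with mr_ℝ(G) ≤ 2, then mr_ℝ(G) ≤ γ_ℝ(G). -/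
open scoped Classical

variable {V : Type*}

/-! The edgeless graph has minimum rank `0` (the zero matrix) and a complete graph at most `1`
(the all-ones matrix). Otherwise `G` has an edge, which makes `I₁(G, X_G)` trivial, and, being
connected but not complete, an induced path `x - a - b`, which makes `I₂(G, X_G)` trivial: the
minor of `L(G, X_G)` on rows `x, a` and columns `a, b` is `det !![-1, 0; x_a, -1] = 1`. -/

section MinRank

variable {R : Type*} [CommRing R]

theorem ringRank_le_of_minor_det_eq_zero {M : Matrix V V R} {r : ℕ}
    (h : ∀ k (f g : Fin k → V), r < k → (M.submatrix f g).det = 0) : ringRank M ≤ r :=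
  csSup_le' fun _ ⟨f, g, _, _, hdet, _⟩ => not_lt.mp fun hk => hdet (h _ f g hk)

theorem ringRank_zero : ringRank (0 : Matrix V V R) = 0 :=
  Nat.le_zero.mp <| ringRank_le_of_minor_det_eq_zero fun k _ _ hk => by
    have : Nonempty (Fin k) := ⟨⟨0, hk⟩⟩
    exact Matrix.det_zero

theorem ringRank_of_const_le_one (c : R) :
    ringRank (Matrix.of fun _ _ => c : Matrix V V R) ≤ 1 :=
  ringRank_le_of_minor_det_eq_zero fun _ _ _ hk =>
    Matrix.det_zero_of_row_eq (i := ⟨0, by omega⟩) (j := ⟨1, hk⟩) (by simp) rfl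

theorem minRank_bot : minRank R (⊥ : SimpleGraph V) = 0 :=
  Nat.le_zero.mp <|
    (minRank_le_ringRank ⟨Matrix.transpose_zero, fun _ _ _ => by simp⟩).trans ringRank_zero.le

theorem minRank_top_le_one [Nontrivial R] : minRank R (⊤ : SimpleGraph V) ≤ 1 :=
  (minRank_le_ringRank (A := Matrix.of fun _ _ => 1) ⟨rfl, fun _ _ huv => by simp [huv]⟩).trans
    (ringRank_of_const_le_one 1)

end MinRank

section AlgCoRank

variable {R : Type*} [CommRing R] [Fintype V]

theorem le_algCoRank_of_isUnit_det {G : SimpleGraph V} {i : ℕ} {f g : Fin i → V}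
    (hf : Function.Injective f) (hg : Function.Injective g)
    (hdet : IsUnit ((genLaplacian R G).submatrix f g).det) : i ≤ algCoRank R G :=
  le_csSup ⟨Fintype.card V, fun _ hi => hi.1⟩
    ⟨by simpa using Fintype.card_le_of_injective f hf,
      Ideal.eq_top_of_isUnit_mem _ (Ideal.subset_span ⟨f, g, hf, hg, rfl⟩) hdet⟩

theorem one_le_algCoRank_of_adj {G : SimpleGraph V} {u v : V} (huv : G.Adj u v) :
    1 ≤ algCoRank R G := by
  refine le_algCoRank_of_isUnit_det (f := fun _ => u) (g := fun _ => v)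
    (fun _ _ _ => Subsingleton.elim _ _) (fun _ _ _ => Subsingleton.elim _ _) ?_
  simp [genLaplacian, huv.ne, huv]

theorem two_le_algCoRank_of_adj_adj_not_adj {G : SimpleGraph V} {x a b : V}
    (hxa : G.Adj x a) (hab : G.Adj a b) (hxb : ¬ G.Adj x b) (hxb' : x ≠ b) :
    2 ≤ algCoRank R G := by
  refine le_algCoRank_of_isUnit_det (f := ![x, a]) (g := ![a, b])
    (by simpa [Function.Injective, Fin.forall_fin_two] using ⟨hxa.ne, hxa.ne.symm⟩)
    (by simpa [Function.Injective, Fin.forall_fin_two] using ⟨hab.ne, hab.ne.symm⟩) ?_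
  have hminor :
      (genLaplacian R G).submatrix ![x, a] ![a, b] = !![-1, 0; MvPolynomial.X a, -1] := by
    ext i j
    fin_cases i <;> fin_cases j <;> simp [genLaplacian, hxa, hab, hxb, hxa.ne, hab.ne, hxb']
  simp [hminor, Matrix.det_fin_two_of]

end AlgCoRank

theorem SimpleGraph.Connected.exists_adj_adj_not_adj_ne_of_ne_top {G : SimpleGraph V}
    (hconn : G.Connected) (hG : G ≠ ⊤) :
    ∃ x a b : V, G.Adj x a ∧ G.Adj a b ∧ ¬ G.Adj x b ∧ x ≠ b := by
  obtain ⟨u, v, huv, hnadj⟩ := SimpleGraph.ne_top_iff_exists_not_adj.mp hG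
  obtain ⟨p, hp⟩ := (hconn u v).exists_path_of_dist
  exact p.exists_adj_adj_not_adj_ne hp.2 ((hconn u v).one_lt_dist_of_ne_of_not_adj huv hnadj)

/-- If `G` is a finite connected simple graph with `mr_ℝ(G) ≤ 2`, then
`mr_ℝ(G) ≤ γ_ℝ(G)`. -/
theorem minRank_le_algCoRank_of_minRank_le_two {V : Type*} [Fintype V] (G : SimpleGraph V)
    (hconn : G.Connected) (h : minRank ℝ G ≤ 2) :
    minRank ℝ G ≤ algCoRank ℝ G := by
  by_cases hbot : G = ⊥
  · subst hbot
    simp [minRank_bot]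
  obtain ⟨u, v, huv⟩ := SimpleGraph.ne_bot_iff_exists_adj.mp hbot
  by_cases htop : G = ⊤
  · subst htop
    exact minRank_top_le_one.trans (one_le_algCoRank_of_adj huv)
  obtain ⟨x, a, b, hxa, hab, hxb, hxb'⟩ := hconn.exists_adj_adj_not_adj_ne_of_ne_top htop
  exact h.trans (two_le_algCoRank_of_adj_adj_not_adj hxa hab hxb hxb')
end
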